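/- Let P ≥ 3 be an odd integer. There exist a width M and parameters λ_m ∈ ℝ, frequencies ω_m ∈ {1,…,(P−1)/2}, and phases φ_m^{(a)}, φ_m^{(b)}, φ_m^{(c)} ∈ ℝ with φ_m^{(a)} + φ_m^{(b)} = φ_m^{(c)} for m = 1,…,M, such that the two-layer quadratic network f(a,b)_k = Σ_{m=1}^{M} w_{m,k} (u_{m,a} + v_{m,b})², with u_{m,i} = λ_m cos((2π/P)ω_m i + φ_m^{(a)}), v_{m,j} = λ_m cos((2π/P)ω_m j + φ_m^{(b)}), w_{m,k} = λ_m cos((2π/P)ω_m k + φ_m^{(c)}), classifies every input correctly: for all a, b ∈ {0,…,P−1}, the unique maximizer over k ∈ {0,…,P−1} of f(a,b)_k is k = (a+b) mod P. That is, the analytical cosine-form solution achieves 100% accuracy on the full modular addition dataset. -/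

import Mathlib

open Real Finset

/-! Take `P = 2Q + 1` and, for each frequency `ω ∈ {1, …, Q}`, three neurons with phases
`φa = φb = 2πi/3`, `φc = 4πi/3` (`i = 0, 1, 2`). Summing over the three phases kills every
product-to-sum term except those in which the phases cancel, so the neurons of frequency `ω`
contribute `3/2 cos (θ(a+b-k)) + 3/4 cos (θ(2a-k)) + 3/4 cos (θ(2b-k))` with `θ = 2πω/P`.
Summed over `ω`, `cos (2πωn/P)` gives `Q` if `P ∣ n` and `-1/2` otherwise (half of a full
character sum, by the symmetry `ω ↦ P - ω`). At `k = a + b` the first term is maximal; for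
`k ≠ a + b` it is minimal and, `P` being odd, at most one of the other two is maximal, which
leaves a margin of `3Q/4 + 3/8`. -/

lemma cos_sum_three_phases (A B C : ℝ) :
    ∑ i : Fin 3, cos (C + 2 * (i * (2 * π / 3))) *
        (cos (A + i * (2 * π / 3)) + cos (B + i * (2 * π / 3))) ^ 2
      = 3 / 2 * cos (A + B - C) + 3 / 4 * cos (2 * A - C) + 3 / 4 * cos (2 * B - C) := by
  have h3 : √3 ^ 2 = 3 := sq_sqrt (by norm_num)
  have c1 : cos (2 * π / 3) = -(1 / 2) := by
    rw [show 2 * π / 3 = π - π / 3 by ring, cos_pi_sub, cos_pi_div_three]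
  have s1 : sin (2 * π / 3) = √3 / 2 := by
    rw [show 2 * π / 3 = π - π / 3 by ring, sin_pi_sub, sin_pi_div_three]
  have c2 : cos (2 * (2 * π / 3)) = -(1 / 2) := by
    rw [show 2 * (2 * π / 3) = π / 3 + π by ring, cos_add_pi, cos_pi_div_three]
  have s2 : sin (2 * (2 * π / 3)) = -(√3 / 2) := by
    rw [show 2 * (2 * π / 3) = π / 3 + π by ring, sin_add_pi, sin_pi_div_three]
  have c4 : cos (2 * (2 * (2 * π / 3))) = -(1 / 2) := by
    rw [show 2 * (2 * (2 * π / 3)) = 2 * π / 3 + 2 * π by ring, cos_add_two_pi, c1]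
  have s4 : sin (2 * (2 * (2 * π / 3))) = √3 / 2 := by
    rw [show 2 * (2 * (2 * π / 3)) = 2 * π / 3 + 2 * π by ring, sin_add_two_pi, s1]
  simp only [Fin.sum_univ_three, Fin.val_zero, Fin.val_one, Fin.val_two, Nat.cast_zero,
    Nat.cast_one, Nat.cast_ofNat, zero_mul, mul_zero, add_zero, one_mul]
  simp only [cos_add, sin_add, cos_sub, cos_two_mul, sin_two_mul, c1, s1, c2, s2, c4, s4]
  ring_nf
  rw [h3, sin_sq A, sin_sq B]
  ring

lemma sum_range_cos_two_pi_div_mul (P : ℕ) (hP : P ≠ 0) (n : ℤ) :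
    ∑ j ∈ range P, cos (2 * π / P * j * n) = if (P : ℤ) ∣ n then (P : ℝ) else 0 := by
  have hζ := Complex.isPrimitiveRoot_exp P hP
  have hre (j : ℕ) :
      cos (2 * π / P * j * n) = ((Complex.exp (2 * π * Complex.I / P) ^ n) ^ j).re := by
    rw [← zpow_natCast, ← zpow_mul, ← Complex.exp_int_mul, ← Complex.exp_ofReal_mul_I_re]
    push_cast
    ring_nf
  simp only [hre, ← Complex.re_sum]
  split_ifs with hdvd
  · simp [(hζ.zpow_eq_one_iff_dvd n).mpr hdvd]
  · have hP1 : (Complex.exp (2 * π * Complex.I / P) ^ n) ^ P = 1 := by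
      rw [← zpow_natCast, ← zpow_mul, mul_comm n, zpow_mul, zpow_natCast, hζ.pow_eq_one, one_zpow]
    rw [geom_sum_eq (mt (hζ.zpow_eq_one_iff_dvd n).mp hdvd), hP1]
    simp

lemma sum_range_eq_add_two_nsmul_of_reflect {M : Type*} [AddCommMonoid M] (f : ℕ → M) (Q : ℕ)
    (hf : ∀ j < Q, f (2 * Q - j) = f (j + 1)) :
    ∑ j ∈ range (2 * Q + 1), f j = f 0 + 2 • ∑ j ∈ range Q, f (j + 1) := by
  have hreflect : ∑ j ∈ range Q, f (Q + j + 1) = ∑ j ∈ range Q, f (j + 1) := by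
    rw [← sum_range_reflect]
    refine sum_congr rfl fun j hj ↦ ?_
    have hjQ := mem_range.mp hj
    rw [← hf j hjQ]
    congr 1
    omega
  rw [sum_range_succ', two_mul, sum_range_add, hreflect, two_nsmul, add_comm]

noncomputable def cosBank (P Q : ℕ) (n : ℤ) : ℝ :=
  ∑ j ∈ range Q, cos (2 * π / P * (j + 1 : ℕ) * n)

lemma cosBank_eq {P Q : ℕ} (hPQ : P = 2 * Q + 1) (n : ℤ) :
    cosBank P Q n = if (P : ℤ) ∣ n then (Q : ℝ) else -1 / 2 := by
  have hP : (P : ℝ) = 2 * Q + 1 := by exact_mod_cast hPQ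
  have hP0 : (P : ℝ) ≠ 0 := by rw [hP]; positivity
  have hfold := sum_range_eq_add_two_nsmul_of_reflect (fun j : ℕ ↦ cos (2 * π / P * j * n)) Q
    fun j hj ↦ by
      have hcast : ((2 * Q - j : ℕ) : ℝ) = P - (j + 1 : ℕ) := by
        rw [hPQ, Nat.cast_sub (by omega)]
        push_cast
        ring
      rw [← cos_int_mul_two_pi_sub _ n, hcast]
      congr 1
      field_simp
      ring
  rw [← hPQ, sum_range_cos_two_pi_div_mul P (by omega) n] at hfold
  simp only [Nat.cast_zero, mul_zero, zero_mul, cos_zero, two_nsmul] at hfold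
  rw [cosBank]
  split_ifs at hfold ⊢ <;> linarith

def neuronFreq (Q : ℕ) (m : Fin (Q * 3)) : ℕ := (finProdFinEquiv.symm m).1 + 1

noncomputable def neuronPhase (Q : ℕ) (m : Fin (Q * 3)) : ℝ :=
  ((finProdFinEquiv.symm m).2 : ℕ) * (2 * π / 3)

lemma sum_neurons_eq_cosBank (P Q a b k : ℕ) :
    ∑ m : Fin (Q * 3), cos (2 * π / P * neuronFreq Q m * k + 2 * neuronPhase Q m) *
        (cos (2 * π / P * neuronFreq Q m * a + neuronPhase Q m) +
          cos (2 * π / P * neuronFreq Q m * b + neuronPhase Q m)) ^ 2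
      = 3 / 2 * cosBank P Q (a + b - k) + 3 / 4 * cosBank P Q (2 * a - k)
        + 3 / 4 * cosBank P Q (2 * b - k) := by
  rw [← finProdFinEquiv.sum_comp, Fintype.sum_prod_type]
  simp only [neuronFreq, neuronPhase, Equiv.symm_apply_apply, cosBank, mul_sum,
    ← sum_add_distrib]
  rw [← Fin.sum_univ_eq_sum_range]
  refine sum_congr rfl fun j _ ↦ ?_
  rw [cos_sum_three_phases]
  push_cast
  ring_nf

lemma Fin.natCast_dvd_sub_iff {P : ℕ} (x y : Fin P) :
    (P : ℤ) ∣ (x : ℤ) - (y : ℤ) ↔ x = y := by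
  rw [← Nat.modEq_iff_dvd]
  exact ⟨fun h ↦ (Fin.ext (h.eq_of_lt_of_lt y.2 x.2)).symm, fun h ↦ h ▸ rfl⟩

lemma Fin.natCast_dvd_add_sub_val_add {P : ℕ} (a b : Fin P) :
    (P : ℤ) ∣ (a : ℤ) + (b : ℤ) - ((a + b : Fin P) : ℤ) := by
  rw [Fin.val_add]
  exact_mod_cast Nat.modEq_iff_dvd.mp (Nat.mod_modEq ((a : ℕ) + b) P)

lemma Fin.natCast_dvd_add_sub_iff {P : ℕ} (a b k : Fin P) :
    (P : ℤ) ∣ (a : ℤ) + (b : ℤ) - (k : ℤ) ↔ k = a + b := by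
  have hsplit : (a : ℤ) + b - k
      = ((a : ℤ) + b - ((a + b : Fin P) : ℤ)) + ((a + b : Fin P) - k) := by
    ring
  rw [hsplit, dvd_add_right (Fin.natCast_dvd_add_sub_val_add a b), Fin.natCast_dvd_sub_iff, eq_comm]

lemma Fin.eq_of_natCast_dvd_two_mul_sub {P : ℕ} (hP : Odd P) {a b k : Fin P}
    (ha : (P : ℤ) ∣ 2 * (a : ℤ) - (k : ℤ)) (hb : (P : ℤ) ∣ 2 * (b : ℤ) - (k : ℤ)) : a = b := by
  have h2 : (P : ℤ) ∣ 2 * ((a : ℤ) - (b : ℤ)) := by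
    rw [show 2 * ((a : ℤ) - b) = (2 * a - k) - (2 * b - k) by ring]
    exact dvd_sub ha hb
  have hcop : IsCoprime (P : ℤ) 2 := by exact_mod_cast hP.coprime_two_right.isCoprime
  exact (Fin.natCast_dvd_sub_iff a b).mp (hcop.dvd_of_dvd_mul_left h2)

lemma cosBank_logit_lt {P Q : ℕ} (hPQ : P = 2 * Q + 1) {a b k : Fin P} (hk : k ≠ a + b) :
    3 / 2 * cosBank P Q (a + b - k) + 3 / 4 * cosBank P Q (2 * a - k)
        + 3 / 4 * cosBank P Q (2 * b - k)
      < 3 / 2 * cosBank P Q (a + b - (a + b : Fin P))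
        + 3 / 4 * cosBank P Q (2 * a - (a + b : Fin P))
        + 3 / 4 * cosBank P Q (2 * b - (a + b : Fin P)) := by
  have hboth : ¬((P : ℤ) ∣ 2 * (a : ℤ) - (k : ℤ) ∧ (P : ℤ) ∣ 2 * (b : ℤ) - (k : ℤ)) := by
    rintro ⟨ha, hb⟩
    obtain rfl := Fin.eq_of_natCast_dvd_two_mul_sub ⟨Q, hPQ⟩ ha hb
    exact hk ((Fin.natCast_dvd_add_sub_iff a a k).mp (by rwa [← two_mul]))
  have hQ : (0 : ℝ) ≤ Q := Q.cast_nonneg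
  simp only [cosBank_eq hPQ]
  rw [if_pos ((Fin.natCast_dvd_add_sub_iff a b _).mpr rfl),
    if_neg (mt (Fin.natCast_dvd_add_sub_iff a b k).mp hk)]
  split_ifs <;> first | linarith | exact absurd ⟨‹_›, ‹_›⟩ hboth

theorem cosine_solution_perfect_accuracy_general (P : ℕ) (hodd : Odd P) :
    ∃ (M : ℕ) (lam : Fin M → ℝ) (ω : Fin M → ℕ) (φa φb φc : Fin M → ℝ),
      (∀ m : Fin M, 1 ≤ ω m ∧ ω m ≤ (P - 1) / 2) ∧
      (∀ m : Fin M, φa m + φb m = φc m) ∧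
      (∀ a b : Fin P, ∀ f : Fin P → ℝ,
        (∀ k : Fin P,
          f k = ∑ m : Fin M,
            (lam m * Real.cos (2 * Real.pi / P * (ω m) * (k : ℕ) + φc m)) *
              (lam m * Real.cos (2 * Real.pi / P * (ω m) * (a : ℕ) + φa m) +
               lam m * Real.cos (2 * Real.pi / P * (ω m) * (b : ℕ) + φb m)) ^ 2) →
        ∀ k : Fin P, k ≠ a + b → f k < f (a + b)) := by
  obtain ⟨Q, hPQ⟩ := hodd
  refine ⟨Q * 3, fun _ ↦ 1, neuronFreq Q, neuronPhase Q, neuronPhase Q,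
    fun m ↦ 2 * neuronPhase Q m, fun m ↦ ⟨le_add_self, ?_⟩, fun m ↦ (two_mul _).symm,
    fun a b f hf k hk ↦ ?_⟩
  · have := (finProdFinEquiv.symm m).1.2
    rw [neuronFreq]
    omega
  · simp only [hf, one_mul, sum_neurons_eq_cosBank]
    exact cosBank_logit_lt hPQ hk

/-- For odd `P ≥ 3` there exist a width `M` and cosine-form neuron parameters
(with frequencies in `{1,…,(P-1)/2}` and phases satisfying
`φ^{(a)} + φ^{(b)} = φ^{(c)}`) such that the two-layer quadratic network
`f(a,b)_k = ∑_m w_{m,k} (u_{m,a} + v_{m,b})²` classifies every modular-addition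
input correctly: `(a+b) mod P` is the unique maximizer of `k ↦ f(a,b)_k`. -/
theorem cosine_solution_perfect_accuracy (P : ℕ) [NeZero P] (hP : 3 ≤ P) (hodd : Odd P) :
    ∃ (M : ℕ) (lam : Fin M → ℝ) (ω : Fin M → ℕ) (φa φb φc : Fin M → ℝ),
      (∀ m : Fin M, 1 ≤ ω m ∧ ω m ≤ (P - 1) / 2) ∧
      (∀ m : Fin M, φa m + φb m = φc m) ∧
      (∀ a b : Fin P, ∀ f : Fin P → ℝ,
        (∀ k : Fin P,
          f k = ∑ m : Fin M,
            (lam m * Real.cos (2 * Real.pi / P * (ω m) * (k : ℕ) + φc m)) *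
              (lam m * Real.cos (2 * Real.pi / P * (ω m) * (a : ℕ) + φa m) +
               lam m * Real.cos (2 * Real.pi / P * (ω m) * (b : ℕ) + φb m)) ^ 2) →
        ∀ k : Fin P, k ≠ a + b → f k < f (a + b)) :=
  cosine_solution_perfect_accuracy_general P hodd
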